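/- arXiv:2505.15573 — 3 statements merged into one kernel-verified Lean document; each statement's English description precedes it below -/
import Mathlib

section
/- Let F ⊆ L be fields, let t₁,…,tₘ ∈ L be algebraically independent over F, and suppose L = F(t₁,…,tₘ)(α) where α is algebraic of degree n over F(t₁,…,tₘ). Then the relative algebraic closure of F in L (the subfield of elements of L algebraic over F) has degree at most n over F. -/
/-!
Let `A` be the algebraic closure of `F` in `L` and `R = F[t₁,…,tₘ]`. Algebraic independence
persists over the algebraic extension `A`, so the monomials in the `tᵢ` (an `F`-basis of `R`)
stay `A`-linearly independent: `A` and `R` are linearly disjoint over `F`. Hence an `F`-basis of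
`A` is `R`-linearly independent, and so linearly independent over the fraction field
`F(t₁,…,tₘ)` of `R`, over which `L` has degree `n`.
-/

open Set

namespace AlgebraicIndependent

variable {ι F S : Type*} [Field F] [CommRing S] [Algebra F S] {x : ι → S}

noncomputable def monomialBasis (hx : AlgebraicIndependent F x) :
    Module.Basis (ι →₀ ℕ) F (Algebra.adjoin F (range x)) :=
  (MvPolynomial.basisMonomials ι F).map hx.aevalEquiv.toLinearEquiv

theorem coe_monomialBasis (hx : AlgebraicIndependent F x) (d : ι →₀ ℕ) :
    (hx.monomialBasis d : S) = d.prod fun i k ↦ x i ^ k := by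
  simp [monomialBasis, MvPolynomial.aeval_monomial]

theorem linearDisjoint_adjoin {E : Subalgebra F S} (hx : AlgebraicIndependent E x) :
    E.LinearDisjoint (Algebra.adjoin F (range x)) := by
  nontriviality S
  have hxF : AlgebraicIndependent F x := hx.restrictScalars (algebraMap F E).injective
  refine Subalgebra.LinearDisjoint.of_basis_right _ _ hxF.monomialBasis ?_
  have hmon : ⇑(Algebra.adjoin F (range x)).val ∘ hxF.monomialBasis =
      (MvPolynomial.aeval x).toLinearMap ∘ MvPolynomial.basisMonomials ι E := by
    ext d
    simp [coe_monomialBasis, MvPolynomial.aeval_monomial]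
  rw [hmon]
  exact (MvPolynomial.basisMonomials ι E).linearIndependent.map'
    (MvPolynomial.aeval x).toLinearMap (LinearMap.ker_eq_bot.mpr hx)

open IntermediateField.algebraAdjoinAdjoin in
theorem rank_integralClosure_le {L : Type*} [Field L] [Algebra F L] {x : ι → L}
    (hx : AlgebraicIndependent F x) :
    Module.rank F (integralClosure F L) ≤ Module.rank (IntermediateField.adjoin F (range x)) L := by
  let b := Module.Basis.ofVectorSpace F (integralClosure F L)
  have hR : LinearIndependent (Algebra.adjoin F (range x)) ((integralClosure F L).val ∘ b) :=
    hx.integralClosure.linearDisjoint_adjoin.linearIndependent_left_of_flat b.linearIndependent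
  have hK := (LinearIndependent.iff_fractionRing _ (IntermediateField.adjoin F (range x))).mp hR
  rw [← b.mk_eq_rank'']
  exact hK.cardinal_le_rank

end AlgebraicIndependent

theorem IntermediateField.rank_eq_natDegree_minpoly_of_adjoin_eq_top {K L : Type*} [Field K]
    [Field L] [Algebra K L] {α : L} (hint : IsIntegral K α) (htop : adjoin K {α} = ⊤) :
    Module.rank K L = (minpoly K α).natDegree := by
  have := adjoin.finiteDimensional hint
  rw [← rank_top', ← htop, ← adjoin.finrank hint, Module.finrank_eq_rank]

/-- If `F ⊆ L` are fields, `t₁, …, tₘ ∈ L` are algebraically independent over `F`, and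
`L = F(t₁,…,tₘ)(α)` with `α` algebraic of degree `n` over `F(t₁,…,tₘ)`, then the relative
algebraic closure of `F` in `L` has degree at most `n` over `F`. -/
theorem stmt0 {F L : Type*} [Field F] [Field L] [Algebra F L]
    {m n : ℕ} (t : Fin m → L) (ht : AlgebraicIndependent F t)
    (α : L)
    (hint : IsIntegral (IntermediateField.adjoin F (Set.range t)) α)
    (hdeg : (minpoly (IntermediateField.adjoin F (Set.range t)) α).natDegree = n)
    (htop : IntermediateField.adjoin (IntermediateField.adjoin F (Set.range t)) {α} = ⊤) :
    Module.rank F (integralClosure F L) ≤ n :=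
  calc Module.rank F (integralClosure F L)
      ≤ Module.rank (IntermediateField.adjoin F (range t)) L := ht.rank_integralClosure_le
    _ = n := by
      rw [IntermediateField.rank_eq_natDegree_minpoly_of_adjoin_eq_top hint htop, hdeg]
end

section
/- Let Ω be a field, K ⊆ L and K ⊆ K′ subfields of Ω with L/K a finite Galois extension. If L and K′ are linearly disjoint over K, then the composite field LK′ is a finite Galois extension of K′ of the same degree, [LK′ : K′] = [L : K], and the restriction map Gal(LK′/K′) → Gal(L/K) is a group isomorphism. -/
/-!
If `L = K(roots of p)` with `p` separable, then `K'L = K'(roots of p)`, so `K'L/K'` is Galois.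
Restricting `σ ∈ Gal(K'L/K')` to `L` lands in `Gal(L/K)` because `L/K` is normal, and the
restriction map is injective because `L` generates `K'L` over `K'`. Linear disjointness gives
`[K'L : K'] = [L : K]`, so both Galois groups have the same order and restriction is bijective.
-/

open Polynomial

namespace IntermediateField

variable {K Ω : Type*} [Field K] [Field Ω] [Algebra K Ω] (L K' : IntermediateField K Ω)

theorem isGalois_adjoin_of_isGalois [IsGalois K L] [FiniteDimensional K L] :
    IsGalois K' (adjoin K' (L : Set Ω)) := by
  obtain ⟨p, hsep, hsplit⟩ := IsGalois.is_separable_splitting_field K L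
  obtain ⟨hpL, hL⟩ := isSplittingField_iff.mp hsplit
  have hpΩ : ((p.map (algebraMap K K')).map (algebraMap K' Ω)).Splits := by
    rw [Polynomial.map_map, ← IsScalarTower.algebraMap_eq, IsScalarTower.algebraMap_eq K L Ω,
      ← Polynomial.map_map]
    exact hpL.map _
  have : (p.map (algebraMap K K')).IsSplittingField K' (adjoin K' (L : Set Ω)) := by
    have hroots : adjoin K' ((p.map (algebraMap K K')).rootSet Ω) = adjoin K' (L : Set Ω) := by
      rw [rootSet, aroots_map, ← rootSet, hL, adjoin_adjoin_right]
    exact hroots ▸ adjoin_rootSet_isSplittingField hpΩ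
  exact IsGalois.of_separable_splitting_field (hsep.map (f := algebraMap K K'))

def inclusionAdjoin : L →ₐ[K] adjoin K' (L : Set Ω) where
  toFun x := ⟨x, subset_adjoin K' (L : Set Ω) x.2⟩
  map_one' := rfl
  map_mul' _ _ := rfl
  map_zero' := rfl
  map_add' _ _ := rfl
  commutes' _ := rfl

section Normal

variable [Normal K L]

noncomputable def restrictNormalAdjoin (σ : Gal(adjoin K' (L : Set Ω)/K')) : Gal(L/K) :=
  AlgHom.restrictNormal'
    ((((adjoin K' (L : Set Ω)).val.comp σ.toAlgHom).restrictScalars K).comp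
      (inclusionAdjoin L K')) L

theorem coe_restrictNormalAdjoin_apply (σ : Gal(adjoin K' (L : Set Ω)/K')) (x : L) :
    (restrictNormalAdjoin L K' σ x : Ω) = σ (inclusionAdjoin L K' x) :=
  AlgHom.restrictNormal_commutes _ L x

theorem inclusionAdjoin_restrictNormalAdjoin_apply (σ : Gal(adjoin K' (L : Set Ω)/K')) (x : L) :
    inclusionAdjoin L K' (restrictNormalAdjoin L K' σ x) = σ (inclusionAdjoin L K' x) :=
  Subtype.ext (coe_restrictNormalAdjoin_apply L K' σ x)

noncomputable def restrictNormalAdjoinHom : Gal(adjoin K' (L : Set Ω)/K') →* Gal(L/K) where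
  toFun := restrictNormalAdjoin L K'
  map_one' := AlgEquiv.ext fun x ↦ Subtype.ext (coe_restrictNormalAdjoin_apply L K' 1 x)
  map_mul' σ τ := AlgEquiv.ext fun x ↦ Subtype.ext <| by
    rw [coe_restrictNormalAdjoin_apply, AlgEquiv.mul_apply, AlgEquiv.mul_apply,
      coe_restrictNormalAdjoin_apply, inclusionAdjoin_restrictNormalAdjoin_apply]

theorem restrictNormalAdjoinHom_injective :
    Function.Injective (restrictNormalAdjoinHom L K') := by
  refine (injective_iff_map_eq_one _).mpr fun σ hσ ↦ ?_
  have hσ' : restrictNormalAdjoin L K' σ = 1 := hσ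
  have hσ_id : σ.toAlgHom = AlgHom.id K' _ := adjoin_algHom_ext K' fun x hx ↦ by
    have h := (inclusionAdjoin_restrictNormalAdjoin_apply L K' σ ⟨x, hx⟩).symm
    rwa [hσ'] at h
  exact AlgEquiv.ext (AlgHom.ext_iff.mp hσ_id)

end Normal

theorem restrictNormalAdjoinHom_bijective [IsGalois K L] [FiniteDimensional K L]
    [FiniteDimensional K' (adjoin K' (L : Set Ω))]
    (h : Module.finrank K' (adjoin K' (L : Set Ω)) = Module.finrank K L) :
    Function.Bijective (restrictNormalAdjoinHom L K') := by
  have := isGalois_adjoin_of_isGalois L K'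
  refine (Nat.bijective_iff_injective_and_card _).mpr
    ⟨restrictNormalAdjoinHom_injective L K', ?_⟩
  rw [IsGalois.card_aut_eq_finrank, IsGalois.card_aut_eq_finrank, h]

end IntermediateField

open IntermediateField

/-- If `L/K` is a finite Galois extension inside `Ω` and `K'` is another intermediate field
of `Ω/K` linearly disjoint from `L` over `K`, then the compositum `LK'` is a finite Galois
extension of `K'` of the same degree, and restriction gives a group isomorphism
`Gal(LK'/K') ≃ Gal(L/K)`. -/
theorem stmt4 {K Ω : Type*} [Field K] [Field Ω] [Algebra K Ω]
    (L K' : IntermediateField K Ω) [IsGalois K L] [FiniteDimensional K L]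
    (hdisj : L.LinearDisjoint K') :
    let M := IntermediateField.adjoin K' ((L : Set Ω))
    IsGalois K' M ∧ FiniteDimensional K' M ∧
    Module.finrank K' M = Module.finrank K L ∧
    ∃ φ : (M ≃ₐ[K'] M) ≃* (L ≃ₐ[K] L),
      ∀ (σ : M ≃ₐ[K'] M) (x : L),
        ((φ σ x : L) : Ω) =
          (σ ⟨(x : Ω), IntermediateField.subset_adjoin K' (L : Set Ω) x.2⟩ : Ω) := by
  intro M
  have hrank : Module.rank K' M = Module.rank K L :=
    hdisj.adjoin_rank_eq_rank_left_of_isAlgebraic_left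
  have hfinite : FiniteDimensional K' M :=
    Module.rank_lt_aleph0_iff.mp (hrank ▸ Module.rank_lt_aleph0 K L)
  have hfinrank : Module.finrank K' M = Module.finrank K L := congrArg Cardinal.toNat hrank
  exact ⟨isGalois_adjoin_of_isGalois L K', hfinite, hfinrank,
    MulEquiv.ofBijective _ (restrictNormalAdjoinHom_bijective L K' hfinrank),
    coe_restrictNormalAdjoin_apply L K'⟩
end

section
/- Let G and H be groups, K ≤ G × H a subgroup, and let π₁ : K → G and π₂ : K → H be the projection homomorphisms. If the kernel of π₁ is finite and contained in the center of K, and C is the centralizer in H of π₂(ker π₁), then π₂(ker π₁) is a finite normal subgroup of C, and the set {(g, h·π₂(ker π₁)) : (g,h) ∈ K, h ∈ C} defines a subgroup of G × (C/π₂(ker π₁)) whose projection to G has trivial intersection with the corresponding copy of ker π₁. -/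
/-!
A central subgroup `Z` of `K` has image `φ(Z)` centralized by all of `φ(K)`, so the second
projection of `K` lands in `C = C_H(π₂(ker π₁))`. In `C` the subgroup `N = π₂(ker π₁)` is normal
(everything in `C` fixes `N` pointwise), and the subgroup in question is the range of
`x ↦ (π₁ x, π₂ x · N)`; an element of it with first coordinate `1` comes from `ker π₁`, whose
second coordinate lies in `N`.
-/

open Subgroup

section CentralKernel

variable {K G H : Type*} [Group K] [Group G] [Group H]

theorem MonoidHom.apply_mem_centralizer_map_of_le_center (φ : K →* H) {Z : Subgroup K}
    (hZ : Z ≤ center K) (x : K) : φ x ∈ centralizer (Z.map φ : Set H) := by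
  rintro _ ⟨z, hz, rfl⟩
  rw [← map_mul, ← map_mul, mem_center_iff.mp (hZ hz) x]

theorem Subgroup.finite_map (φ : K →* H) (Z : Subgroup K) [Finite Z] : Finite (Z.map φ) :=
  Finite.of_surjective _ (φ.subgroupMap_surjective Z)

instance Subgroup.normal_subgroupOf_centralizer (N : Subgroup H) :
    (N.subgroupOf (centralizer (N : Set H))).Normal :=
  normal_subgroupOf_of_le_normalizer (centralizer_le_normalizer _)

/-- The map `x ↦ (φ₁ x, φ₂ x · N)` into `G × C/N`, where `N = φ₂(ker φ₁)` and `C` is its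
centralizer. -/
def MonoidHom.prodQuotientMapKer (φ₁ : K →* G) (φ₂ : K →* H) (hcent : φ₁.ker ≤ center K) :
    K →* G × ((centralizer (φ₁.ker.map φ₂ : Set H) ⧸
      (φ₁.ker.map φ₂).subgroupOf (centralizer (φ₁.ker.map φ₂ : Set H)))) :=
  φ₁.prod <| (QuotientGroup.mk' _).comp <|
    φ₂.codRestrict _ (φ₂.apply_mem_centralizer_map_of_le_center hcent)

theorem MonoidHom.eq_one_of_one_mem_range_prodQuotientMapKer (φ₁ : K →* G) (φ₂ : K →* H)
    (hcent : φ₁.ker ≤ center K)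
    {q : centralizer (φ₁.ker.map φ₂ : Set H) ⧸
      (φ₁.ker.map φ₂).subgroupOf (centralizer (φ₁.ker.map φ₂ : Set H))}
    (hq : (1, q) ∈ (φ₁.prodQuotientMapKer φ₂ hcent).range) :
    q = 1 := by
  obtain ⟨x, hx⟩ := hq
  have hker : x ∈ φ₁.ker := congrArg Prod.fst hx
  have hxq : (φ₁.prodQuotientMapKer φ₂ hcent x).2 = q := congrArg Prod.snd hx
  rw [← hxq]
  exact (QuotientGroup.eq_one_iff _).mpr (mem_subgroupOf.mpr (mem_map_of_mem φ₂ hker))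

end CentralKernel

/-- Let `K ≤ G × H` with projections `π₁, π₂`. If `ker π₁` is finite and central in `K`,
and `C` is the centralizer in `H` of `π₂(ker π₁)`, then `π₂(ker π₁)` is a finite normal
subgroup of `C`, and `{(g, h·π₂(ker π₁)) : (g,h) ∈ K, h ∈ C}` is a subgroup of
`G × C/π₂(ker π₁)` meeting the copy of `ker π₁` trivially. -/
theorem stmt15 {G H : Type*} [Group G] [Group H] (K : Subgroup (G × H))
    (π₁ : ↥K →* G) (π₂ : ↥K →* H)
    (hπ₁ : ∀ x : K, π₁ x = (x : G × H).1) (hπ₂ : ∀ x : K, π₂ x = (x : G × H).2)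
    (hfin : Finite π₁.ker) (hcent : (π₁.ker : Subgroup ↥K) ≤ Subgroup.center ↥K) :
    letI N : Subgroup H := Subgroup.map π₂ π₁.ker
    letI C : Subgroup H := Subgroup.centralizer (N : Set H)
    Finite N ∧
    ∃ _hnormal : (N.subgroupOf C).Normal,
      ∃ K₂ : Subgroup (G × (C ⧸ N.subgroupOf C)),
        (K₂ : Set (G × (C ⧸ N.subgroupOf C))) =
          {p | ∃ (g : G) (h : H) (hgh : (g, h) ∈ K) (hC : h ∈ C),
            p = (g, QuotientGroup.mk (⟨h, hC⟩ : C))} ∧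
        ∀ q : C ⧸ N.subgroupOf C, (1, q) ∈ K₂ → q = 1 := by
  refine ⟨finite_map π₂ _, normal_subgroupOf_centralizer _, (π₁.prodQuotientMapKer π₂ hcent).range,
    ?_, fun q ↦ π₁.eq_one_of_one_mem_range_prodQuotientMapKer π₂ hcent⟩
  ext p
  constructor
  · rintro ⟨x, rfl⟩
    have hC := π₂.apply_mem_centralizer_map_of_le_center hcent x
    rw [hπ₂] at hC
    refine ⟨_, _, x.2, hC, ?_⟩
    exact Prod.ext (hπ₁ x) (congrArg QuotientGroup.mk (Subtype.ext (hπ₂ x)))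
  · rintro ⟨g, h, hgh, hC, rfl⟩
    exact ⟨⟨(g, h), hgh⟩, Prod.ext (hπ₁ _) (congrArg QuotientGroup.mk (Subtype.ext (hπ₂ _)))⟩
end
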